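/- arXiv:2102.08599 — 3 statements merged into one kernel-verified Lean document; each statement's English description precedes it below -/
import Mathlib

section
/- Let λ be a complex number with Im λ > 0 and λ² a negative real number (i.e., λ = it for some real t > 0), let m be a positive integer, and set M = M_{λ,m} (a 2m×2m matrix) and N = S_{2m}. The space of complex 2m×2m matrices X satisfying X·M·N + M·N·Xᵀ = 0 and Xᵀ·N·conj(M) + N·conj(M)·X = 0 is a ℂ-vector space of dimension m. -/
open Matrix

noncomputable section

open scoped Classical

/-- The `m × m` upper-triangular Jordan block `J_{λ,m}` with eigenvalue `λ`. -/
def Jb (l : ℂ) (m : ℕ) : Matrix (Fin m) (Fin m) ℂ :=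
  Matrix.of fun i j =>
    if (j : ℕ) = (i : ℕ) then l else if (j : ℕ) = (i : ℕ) + 1 then 1 else 0

/-- The `m × m` anti-diagonal matrix `S_m` ( `(i,j)` entry is `1` iff `i + j = m + 1`,
1-based). -/
def Sb (m : ℕ) : Matrix (Fin m) (Fin m) ℂ :=
  Matrix.of fun i j => if (i : ℕ) + (j : ℕ) + 1 = m then 1 else 0

/-- The size `s(λ,m)` of the matrix `M_{λ,m}`: `m` if `λ ∈ ℝ`, and `2m` otherwise. -/
def sz (l : ℂ) (m : ℕ) : ℕ := if l.im = 0 then m else 2 * m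

/-- The matrix `M_{λ,m}`: the Jordan block `J_{λ,m}` if `λ ∈ ℝ`, and the block matrix
`[[0, J_{λ²,m}], [I, 0]]` otherwise. -/
def Mb (l : ℂ) (m : ℕ) : Matrix (Fin (sz l m)) (Fin (sz l m)) ℂ :=
  Matrix.of fun i j =>
    if l.im = 0 then
      (if (j : ℕ) = (i : ℕ) then l else if (j : ℕ) = (i : ℕ) + 1 then 1 else 0)
    else if (i : ℕ) < m ∧ m ≤ (j : ℕ) then
      (if (j : ℕ) - m = (i : ℕ) then l ^ 2
       else if (j : ℕ) - m = (i : ℕ) + 1 then 1 else 0)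
    else if m ≤ (i : ℕ) ∧ (i : ℕ) - m = (j : ℕ) then 1 else 0

/-- The matrix `N_{λ,m}`: `S_m` if `λ ∈ ℝ` and `S_{2m}` otherwise. -/
def Nb (l : ℂ) (m : ℕ) : Matrix (Fin (sz l m)) (Fin (sz l m)) ℂ := Sb (sz l m)

/-- A complex number is normalized if `Re λ ≥ 0` and, when `Re λ = 0`, also `Im λ ≥ 0`. -/
def Normalized (l : ℂ) : Prop := 0 ≤ l.re ∧ (l.re = 0 → 0 ≤ l.im)

/-- The linear map `B ↦ B * X + X * Bᵀ`. -/
def rmap {n : Type*} [Fintype n] (X : Matrix n n ℂ) :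
    Matrix n n ℂ →ₗ[ℂ] Matrix n n ℂ where
  toFun B := B * X + X * Bᵀ
  map_add' B C := by
    simp only [Matrix.add_mul, Matrix.mul_add, Matrix.transpose_add]
    abel
  map_smul' c B := by
    simp only [Matrix.smul_mul, Matrix.mul_smul, Matrix.transpose_smul, smul_add,
      RingHom.id_apply]

/-- The linear map `B ↦ Bᵀ * Y + Y * B`. -/
def lmap {n : Type*} [Fintype n] (Y : Matrix n n ℂ) :
    Matrix n n ℂ →ₗ[ℂ] Matrix n n ℂ where
  toFun B := Bᵀ * Y + Y * B
  map_add' B C := by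
    simp only [Matrix.add_mul, Matrix.mul_add, Matrix.transpose_add]
    abel
  map_smul' c B := by
    simp only [Matrix.smul_mul, Matrix.mul_smul, Matrix.transpose_smul, smul_add,
      RingHom.id_apply]

/-- The subspace `𝒜°` associated with `(H, A)`:  matrices `B` with
`B·A·H⁻¹ + A·H⁻¹·Bᵀ = 0` and `Bᵀ·H·conj(A) + H·conj(A)·B = 0`. -/
def scriptAo {n : Type*} [Fintype n] [DecidableEq n] (H A : Matrix n n ℂ) :
    Submodule ℂ (Matrix n n ℂ) :=
  LinearMap.ker (rmap (A * H⁻¹)) ⊓ LinearMap.ker (lmap (H * A.map (starRingEnd ℂ)))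

/-- The subspace `𝒜` associated with `(H, A)`:  matrices `B` with
`B·A·H⁻¹ + A·H⁻¹·Bᵀ ∈ ℂ·(A·H⁻¹)` and `Bᵀ·H·conj(A) + H·conj(A)·B ∈ ℂ·(H·conj(A))`. -/
def scriptA {n : Type*} [Fintype n] [DecidableEq n] (H A : Matrix n n ℂ) :
    Submodule ℂ (Matrix n n ℂ) :=
  Submodule.comap (rmap (A * H⁻¹)) (Submodule.span ℂ {A * H⁻¹}) ⊓
    Submodule.comap (lmap (H * A.map (starRingEnd ℂ)))
      (Submodule.span ℂ {H * A.map (starRingEnd ℂ)})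

def toep {m : ℕ} (c : Fin m → ℂ) : Matrix (Fin m) (Fin m) ℂ :=
  Matrix.of fun i j =>
    if h : (i : ℕ) ≤ (j : ℕ) then c ⟨(j : ℕ) - (i : ℕ), by omega⟩ else 0

variable {m : ℕ}

lemma Sb_mul_apply (A : Matrix (Fin m) (Fin m) ℂ) (i j : Fin m) :
    (Sb m * A) i j = A (Fin.rev i) j := by
  rw [Matrix.mul_apply, Finset.sum_eq_single (Fin.rev i)]
  · have hv : (Fin.rev i : ℕ) = m - (i + 1) := Fin.val_rev i
    have hc : (i : ℕ) + (Fin.rev i : ℕ) + 1 = m := by have := i.isLt; omega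
    simp only [Sb, Matrix.of_apply]
    rw [if_pos hc, one_mul]
  · intro b _ hb
    have : ¬ ((i : ℕ) + (b : ℕ) + 1 = m) := by
      intro hc; apply hb; apply Fin.ext; rw [Fin.val_rev]; omega
    simp [Sb, this]
  · simp

lemma mul_Sb_apply (A : Matrix (Fin m) (Fin m) ℂ) (i j : Fin m) :
    (A * Sb m) i j = A i (Fin.rev j) := by
  rw [Matrix.mul_apply, Finset.sum_eq_single (Fin.rev j)]
  · have hv : (Fin.rev j : ℕ) = m - (j + 1) := Fin.val_rev j
    have hc : (Fin.rev j : ℕ) + (j : ℕ) + 1 = m := by have := j.isLt; omega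
    simp only [Sb, Matrix.of_apply]
    rw [if_pos hc, mul_one]
  · intro b _ hb
    have : ¬ ((b : ℕ) + (j : ℕ) + 1 = m) := by
      intro hc; apply hb; apply Fin.ext; rw [Fin.val_rev]; omega
    simp [Sb, this]
  · simp

lemma Sb_mul_Sb : Sb m * Sb m = 1 := by
  ext i j
  rw [Sb_mul_apply]
  have hv : (Fin.rev i : ℕ) = m - (i + 1) := Fin.val_rev i
  have hi := i.isLt; have hj := j.isLt
  simp only [Sb, Matrix.of_apply, Matrix.one_apply]
  by_cases h : i = j
  · subst h; rw [if_pos (by omega), if_pos rfl]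
  · rw [if_neg, if_neg h]
    intro hc; exact h (Fin.ext (by omega))

lemma Sb_transpose : (Sb m)ᵀ = Sb m := by
  ext i j
  simp only [Matrix.transpose_apply, Sb, Matrix.of_apply]
  exact if_congr (by constructor <;> omega) rfl rfl

lemma sharp_apply (X : Matrix (Fin m) (Fin m) ℂ) (i j : Fin m) :
    (Sb m * Xᵀ * Sb m) i j = X (Fin.rev j) (Fin.rev i) := by
  rw [mul_Sb_apply, Sb_mul_apply, Matrix.transpose_apply]

lemma toep_sharp (c : Fin m → ℂ) : Sb m * (toep c)ᵀ * Sb m = toep c := by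
  ext i j
  rw [sharp_apply]
  have hvi : (Fin.rev i : ℕ) = m - (i + 1) := Fin.val_rev i
  have hvj : (Fin.rev j : ℕ) = m - (j + 1) := Fin.val_rev j
  have hi := i.isLt; have hj := j.isLt
  simp only [toep, Matrix.of_apply]
  by_cases h : (i : ℕ) ≤ (j : ℕ)
  · rw [dif_pos (by omega), dif_pos h]
    congr 1
    apply Fin.ext
    simp only []
    omega
  · rw [dif_neg (by omega), dif_neg h]

lemma Jb_eq_toep (μ : ℂ) :
    Jb μ m = toep (fun k => if (k : ℕ) = 0 then μ else if (k : ℕ) = 1 then 1 else 0) := by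
  ext i j
  simp only [Jb, toep, Matrix.of_apply]
  split_ifs <;> first | rfl | omega

lemma mul_Jb_apply (μ : ℂ) (A : Matrix (Fin m) (Fin m) ℂ) (i j : Fin m) :
    (A * Jb μ m) i j
      = μ * A i j + (if h : 1 ≤ (j : ℕ) then A i ⟨(j : ℕ) - 1, by omega⟩ else 0) := by
  rw [Matrix.mul_apply]
  have : ∀ k : Fin m, A i k * Jb μ m k j
      = (if k = j then μ * A i j else 0)
        + (if h : 1 ≤ (j : ℕ) then (if k = ⟨(j : ℕ) - 1, by omega⟩ then A i k else 0) else 0) := by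
    intro k
    simp only [Jb, Matrix.of_apply]
    by_cases h0 : (j : ℕ) = (k : ℕ)
    · have hk : k = j := Fin.ext h0.symm
      rw [hk, if_pos rfl, if_pos rfl, mul_comm]
      by_cases h1 : 1 ≤ (j : ℕ)
      · rw [dif_pos h1, if_neg (by intro hc; have := congrArg Fin.val hc; simp at this; omega)]
        ring
      · rw [dif_neg h1]; ring
    · rw [if_neg (fun hc => h0 (congrArg Fin.val hc).symm), if_neg h0]
      by_cases h1 : (j : ℕ) = (k : ℕ) + 1
      · rw [if_pos h1, dif_pos (by omega), if_pos (by apply Fin.ext; simp; omega), mul_one,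
          zero_add]
      · rw [if_neg h1, mul_zero, zero_add]
        by_cases h2 : 1 ≤ (j : ℕ)
        · rw [dif_pos h2, if_neg (by intro hc; have := congrArg Fin.val hc; simp at this; omega)]
        · rw [dif_neg h2]
  rw [Finset.sum_congr rfl (fun k _ => this k), Finset.sum_add_distrib,
    Finset.sum_ite_eq' Finset.univ j (fun _ => μ * A i j)]
  simp only [Finset.mem_univ, if_pos]
  congr 1
  by_cases h1 : 1 ≤ (j : ℕ)
  · rw [dif_pos h1]
    simp only [dif_pos h1]
    rw [Finset.sum_ite_eq' Finset.univ (⟨(j : ℕ) - 1, by omega⟩ : Fin m) (fun k => A i k)]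
    simp
  · simp [dif_neg h1]

lemma Jb_mul_apply (μ : ℂ) (A : Matrix (Fin m) (Fin m) ℂ) (i j : Fin m) :
    (Jb μ m * A) i j
      = μ * A i j + (if h : (i : ℕ) + 1 < m then A ⟨(i : ℕ) + 1, h⟩ j else 0) := by
  rw [Matrix.mul_apply]
  have : ∀ k : Fin m, Jb μ m i k * A k j
      = (if k = i then μ * A i j else 0)
        + (if h : (i : ℕ) + 1 < m then (if k = ⟨(i : ℕ) + 1, h⟩ then A k j else 0) else 0) := by
    intro k
    simp only [Jb, Matrix.of_apply]
    by_cases h0 : (k : ℕ) = (i : ℕ)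
    · have hk : k = i := Fin.ext h0
      rw [hk, if_pos rfl, if_pos rfl]
      by_cases h1 : (i : ℕ) + 1 < m
      · rw [dif_pos h1, if_neg (by intro hc; have := congrArg Fin.val hc; simp at this)]
        ring
      · rw [dif_neg h1]; ring
    · rw [if_neg (fun hc => h0 (congrArg Fin.val hc)), if_neg h0]
      by_cases h1 : (k : ℕ) = (i : ℕ) + 1
      · rw [if_pos h1, dif_pos (by have := k.isLt; omega),
          if_pos (Fin.ext (by simpa using h1)), one_mul, zero_add]
      · rw [if_neg h1, zero_mul, zero_add]
        by_cases h2 : (i : ℕ) + 1 < m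
        · rw [dif_pos h2, if_neg (by intro hc; have := congrArg Fin.val hc; simp at this; omega)]
        · rw [dif_neg h2]
  rw [Finset.sum_congr rfl (fun k _ => this k), Finset.sum_add_distrib,
    Finset.sum_ite_eq' Finset.univ i (fun _ => μ * A i j)]
  simp only [Finset.mem_univ, if_pos]
  congr 1
  by_cases h1 : (i : ℕ) + 1 < m
  · rw [dif_pos h1]
    simp only [dif_pos h1]
    rw [Finset.sum_ite_eq' Finset.univ (⟨(i : ℕ) + 1, h1⟩ : Fin m) (fun k => A k j)]
    simp
  · simp [dif_neg h1]

lemma toep_comm (μ : ℂ) (c : Fin m → ℂ) : toep c * Jb μ m = Jb μ m * toep c := by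
  ext i j
  rw [mul_Jb_apply, Jb_mul_apply]
  congr 1
  simp only [toep, Matrix.of_apply]
  have hi := i.isLt; have hj := j.isLt
  by_cases h1 : 1 ≤ (j : ℕ)
  · rw [dif_pos h1]
    by_cases h2 : (i : ℕ) + 1 < m
    · rw [dif_pos h2]
      by_cases h3 : (i : ℕ) + 1 ≤ (j : ℕ)
      · rw [dif_pos (by omega), dif_pos (by omega)]
        congr 1
        apply Fin.ext
        simp only
        omega
      · rw [dif_neg (by omega), dif_neg (by omega)]
    · rw [dif_neg h2, dif_neg (by omega)]
  · rw [dif_neg h1]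
    by_cases h2 : (i : ℕ) + 1 < m
    · rw [dif_pos h2, dif_neg (by omega)]
    · rw [dif_neg h2]

lemma comm_toep (hm : 0 < m) (μ : ℂ) (C : Matrix (Fin m) (Fin m) ℂ)
    (h : C * Jb μ m = Jb μ m * C) : C = toep (fun k => C ⟨0, hm⟩ k) := by
  have key : ∀ (iN : ℕ) (hi : iN < m) (j : Fin m),
      (if h : 1 ≤ (j : ℕ) then C ⟨iN, hi⟩ ⟨(j : ℕ) - 1, by omega⟩ else 0)
        = (if h : iN + 1 < m then C ⟨iN + 1, h⟩ j else 0) := by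
    intro iN hi j
    have h2 := congrFun (congrFun h ⟨iN, hi⟩) j
    rw [mul_Jb_apply, Jb_mul_apply] at h2
    exact add_left_cancel h2
  suffices H : ∀ (iN : ℕ) (hi : iN < m) (j : Fin m),
      C ⟨iN, hi⟩ j = toep (fun k => C ⟨0, hm⟩ k) ⟨iN, hi⟩ j by
    ext i j
    have := H i i.isLt j
    simpa using this
  intro iN
  induction iN with
  | zero =>
    intro hi j
    simp only [toep, Matrix.of_apply]
    rw [dif_pos (by omega)]
    congr 1
  | succ i ih =>
    intro hi j
    have hk := key i (by omega) j
    rw [dif_pos hi] at hk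
    rw [← hk]
    by_cases h1 : 1 ≤ (j : ℕ)
    · rw [dif_pos h1, ih (by omega) ⟨(j : ℕ) - 1, by omega⟩]
      simp only [toep, Matrix.of_apply]
      by_cases h2 : i + 1 ≤ (j : ℕ)
      · rw [dif_pos (by omega), dif_pos (by omega)]
        congr 1
        apply Fin.ext
        simp only
        omega
      · rw [dif_neg (by omega), dif_neg (by omega)]
    · rw [dif_neg h1]
      simp only [toep, Matrix.of_apply]
      rw [dif_neg (by omega)]

lemma Jb_sharp (μ : ℂ) : Sb m * (Jb μ m)ᵀ * Sb m = Jb μ m := by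
  rw [Jb_eq_toep μ, toep_sharp]

lemma sharp_swap {X : Matrix (Fin m) (Fin m) ℂ} (h : Sb m * Xᵀ * Sb m = X) :
    Sb m * Xᵀ = X * Sb m := by
  have : X * Sb m = Sb m * Xᵀ := by
    conv_lhs => rw [← h]
    rw [Matrix.mul_assoc, Sb_mul_Sb, Matrix.mul_one]
  exact this.symm

lemma sharp_swap' {X : Matrix (Fin m) (Fin m) ℂ} (h : Sb m * Xᵀ * Sb m = X) :
    Xᵀ * Sb m = Sb m * X := by
  have : Sb m * X = Xᵀ * Sb m := by
    conv_lhs => rw [← h]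
    rw [← Matrix.mul_assoc, ← Matrix.mul_assoc, Sb_mul_Sb, Matrix.one_mul]
  exact this.symm

lemma sharp_sharp (X : Matrix (Fin m) (Fin m) ℂ) :
    Sb m * (Sb m * Xᵀ * Sb m)ᵀ * Sb m = X := by
  rw [Matrix.transpose_mul, Matrix.transpose_mul, Matrix.transpose_transpose, Sb_transpose]
  calc Sb m * (Sb m * (X * Sb m)) * Sb m
      = (Sb m * Sb m) * X * (Sb m * Sb m) := by
        simp only [Matrix.mul_assoc]
    _ = X := by rw [Sb_mul_Sb, Matrix.one_mul, Matrix.mul_one]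

lemma s_cancel_right {X Y : Matrix (Fin m) (Fin m) ℂ} (h : X * Sb m = Y * Sb m) : X = Y := by
  have h2 := congrArg (· * Sb m) h
  simpa only [Matrix.mul_assoc, Sb_mul_Sb, Matrix.mul_one] using h2

lemma s_cancel_left {X Y : Matrix (Fin m) (Fin m) ℂ} (h : Sb m * X = Sb m * Y) : X = Y := by
  have h2 := congrArg (Sb m * ·) h
  simpa only [← Matrix.mul_assoc, Sb_mul_Sb, Matrix.one_mul] using h2

lemma anti_block_zero (hm : 0 < m) (μ : ℂ) (A : Matrix (Fin m) (Fin m) ℂ)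
    (hsharp : Sb m * Aᵀ * Sb m = -A) (hcomm : A * Jb μ m = Jb μ m * A) : A = 0 := by
  have h1 : A = toep (fun k => A ⟨0, hm⟩ k) := comm_toep hm μ A hcomm
  have h2 : Sb m * Aᵀ * Sb m = A := by
    conv_lhs => rw [h1]
    rw [toep_sharp]
    exact h1.symm
  have h3 : A = -A := h2.symm.trans hsharp
  have h4 : (2 : ℂ) • A = 0 := by
    rw [two_smul]
    nth_rewrite 2 [h3]
    exact add_neg_cancel A
  exact (smul_eq_zero.mp h4).resolve_left two_ne_zero

lemma toep_add (c d : Fin m → ℂ) : toep (c + d) = toep c + toep d := by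
  ext i j
  simp only [toep, Matrix.of_apply, Matrix.add_apply, Pi.add_apply]
  by_cases h : (i : ℕ) ≤ (j : ℕ)
  · rw [dif_pos h, dif_pos h, dif_pos h]
  · rw [dif_neg h, dif_neg h, dif_neg h, add_zero]

lemma toep_smul (a : ℂ) (c : Fin m → ℂ) : toep (a • c) = a • toep c := by
  ext i j
  simp only [toep, Matrix.of_apply, Matrix.smul_apply, Pi.smul_apply]
  by_cases h : (i : ℕ) ≤ (j : ℕ)
  · rw [dif_pos h, dif_pos h]
  · rw [dif_neg h, dif_neg h, smul_zero]

def Mblk (μ : ℂ) (m : ℕ) : Matrix (Fin m ⊕ Fin m) (Fin m ⊕ Fin m) ℂ :=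
  Matrix.fromBlocks 0 (Jb μ m) 1 0

def Sblk (m : ℕ) : Matrix (Fin m ⊕ Fin m) (Fin m ⊕ Fin m) ℂ :=
  Matrix.fromBlocks 0 (Sb m) (Sb m) 0

lemma MS_eq (μ : ℂ) : Mblk μ m * Sblk m
    = Matrix.fromBlocks (Jb μ m * Sb m) 0 0 (Sb m) := by
  simp [Mblk, Sblk, Matrix.fromBlocks_multiply]

lemma SM_eq (μ : ℂ) : Sblk m * Mblk μ m
    = Matrix.fromBlocks (Sb m) 0 0 (Sb m * Jb μ m) := by
  simp [Mblk, Sblk, Matrix.fromBlocks_multiply]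

lemma fromBlocks_eq_zero_iff {A B C D : Matrix (Fin m) (Fin m) ℂ} :
    Matrix.fromBlocks A B C D = 0 ↔ A = 0 ∧ B = 0 ∧ C = 0 ∧ D = 0 := by
  constructor
  · intro h
    refine ⟨?_, ?_, ?_, ?_⟩ <;> ext i j
    · simpa using congrFun (congrFun h (Sum.inl i)) (Sum.inl j)
    · simpa using congrFun (congrFun h (Sum.inl i)) (Sum.inr j)
    · simpa using congrFun (congrFun h (Sum.inr i)) (Sum.inl j)
    · simpa using congrFun (congrFun h (Sum.inr i)) (Sum.inr j)
  · rintro ⟨rfl, rfl, rfl, rfl⟩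
    ext (i | i) (j | j) <;> simp

def phi (μ : ℂ) (m : ℕ) :
    (Fin m → ℂ) →ₗ[ℂ] Matrix (Fin m ⊕ Fin m) (Fin m ⊕ Fin m) ℂ where
  toFun c := Matrix.fromBlocks 0 (-(Jb μ m * toep c)) (toep c) 0
  map_add' c d := by
    simp only [toep_add, Matrix.mul_add, neg_add]
    conv_rhs => rw [Matrix.fromBlocks_add]
    norm_num
  map_smul' a c := by
    simp only [toep_smul, Matrix.mul_smul, RingHom.id_apply]
    conv_rhs => rw [Matrix.fromBlocks_smul]
    norm_num

theorem key_eq (μ : ℂ) (hm : 0 < m) :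
    (LinearMap.ker (rmap (Mblk μ m * Sblk m)) ⊓
      LinearMap.ker (lmap (Sblk m * Mblk μ m)))
      = LinearMap.range (phi μ m) := by
  ext B
  simp only [Submodule.mem_inf, LinearMap.mem_ker, LinearMap.mem_range]
  constructor
  · rintro ⟨h1, h2⟩
    have h1' : B * (Mblk μ m * Sblk m) + (Mblk μ m * Sblk m) * Bᵀ = 0 := h1
    have h2' : Bᵀ * (Sblk m * Mblk μ m) + (Sblk m * Mblk μ m) * B = 0 := h2
    clear h1 h2
    obtain ⟨A, B12, C, D, rfl⟩ : ∃ A B12 C D, B = Matrix.fromBlocks A B12 C D :=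
      ⟨B.toBlocks₁₁, B.toBlocks₁₂, B.toBlocks₂₁, B.toBlocks₂₂,
        (Matrix.fromBlocks_toBlocks B).symm⟩
    rw [MS_eq, Matrix.fromBlocks_transpose] at h1'
    rw [SM_eq, Matrix.fromBlocks_transpose] at h2'
    simp only [Matrix.fromBlocks_multiply, Matrix.fromBlocks_add, Matrix.mul_zero,
      Matrix.zero_mul, add_zero, zero_add, fromBlocks_eq_zero_iff] at h1' h2'
    obtain ⟨ha, hb, hc, hd⟩ := h1'
    obtain ⟨he, hf, hg, hh⟩ := h2'
    -- A = 0
    have heq : Aᵀ * Sb m = -(Sb m * A) := eq_neg_of_add_eq_zero_left he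
    have hsharpA : Sb m * Aᵀ * Sb m = -A := by
      rw [Matrix.mul_assoc, heq, Matrix.mul_neg, ← Matrix.mul_assoc, Sb_mul_Sb,
        Matrix.one_mul]
    have h5 : Sb m * Aᵀ = -A * Sb m := by
      have h9 := congrArg (· * Sb m) hsharpA
      simpa only [Matrix.mul_assoc, Sb_mul_Sb, Matrix.mul_one, Matrix.neg_mul] using h9
    have hcommA : A * Jb μ m = Jb μ m * A := by
      apply s_cancel_right (m := m)
      have ha' : A * (Jb μ m * Sb m) = -((Jb μ m * Sb m) * Aᵀ) :=
        eq_neg_of_add_eq_zero_left ha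
      calc A * Jb μ m * Sb m = A * (Jb μ m * Sb m) := by rw [Matrix.mul_assoc]
        _ = -((Jb μ m * Sb m) * Aᵀ) := ha'
        _ = -(Jb μ m * (Sb m * Aᵀ)) := by rw [Matrix.mul_assoc]
        _ = Jb μ m * A * Sb m := by
            rw [h5, Matrix.neg_mul, Matrix.mul_neg, neg_neg, ← Matrix.mul_assoc]
    have hA : A = 0 := anti_block_zero hm μ A hsharpA hcommA
    -- D = 0
    have hd' : Sb m * Dᵀ = -(D * Sb m) := eq_neg_of_add_eq_zero_right hd
    have hsharpD : Sb m * Dᵀ * Sb m = -D := by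
      rw [hd', Matrix.neg_mul, Matrix.mul_assoc, Sb_mul_Sb, Matrix.mul_one]
    have hcommD : D * Jb μ m = Jb μ m * D := by
      have h6 : Dᵀ * (Sb m * Jb μ m) = -((Sb m * Jb μ m) * D) :=
        eq_neg_of_add_eq_zero_left hh
      have h7 := congrArg (Sb m * ·) h6
      simp only [Matrix.mul_neg] at h7
      rw [show Sb m * (Dᵀ * (Sb m * Jb μ m)) = (Sb m * Dᵀ * Sb m) * Jb μ m by
            simp only [Matrix.mul_assoc],
          hsharpD,
          show Sb m * (Sb m * Jb μ m * D) = (Sb m * Sb m) * (Jb μ m * D) by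
            simp only [Matrix.mul_assoc],
          Sb_mul_Sb, Matrix.one_mul, Matrix.neg_mul, neg_inj] at h7
      exact h7
    have hD : D = 0 := anti_block_zero hm μ D hsharpD hcommD
    -- C and B12
    set E := Sb m * Cᵀ * Sb m with hEdef
    have hB12 : B12 = -(Jb μ m * E) := by
      have hb' : B12 * Sb m = -((Jb μ m * Sb m) * Cᵀ) := eq_neg_of_add_eq_zero_left hb
      have h9 := congrArg (· * Sb m) hb'
      simp only [Matrix.mul_assoc, Sb_mul_Sb, Matrix.mul_one, Matrix.neg_mul] at h9
      rw [h9, hEdef]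
      simp only [Matrix.mul_assoc]
    have hB12' : B12 = -(E * Jb μ m) := by
      have hf' : Sb m * B12 = -(Cᵀ * (Sb m * Jb μ m)) := eq_neg_of_add_eq_zero_right hf
      have h9 := congrArg (Sb m * ·) hf'
      rw [show Sb m * (Sb m * B12) = (Sb m * Sb m) * B12 by simp only [Matrix.mul_assoc],
        Sb_mul_Sb, Matrix.one_mul] at h9
      rw [h9, hEdef]
      simp only [Matrix.mul_neg, Matrix.mul_assoc]
    have hcommE : E * Jb μ m = Jb μ m * E := by
      have := hB12.symm.trans hB12'
      exact (neg_inj.mp this).symm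
    have hE : E = toep (fun k => E ⟨0, hm⟩ k) := comm_toep hm μ E hcommE
    have hC : C = E := by
      have h8 : Sb m * Eᵀ * Sb m = C := sharp_sharp C
      rw [← h8]
      conv_lhs => rw [hE]
      rw [toep_sharp]
      exact hE.symm
    refine ⟨(fun k => E ⟨0, hm⟩ k), ?_⟩
    show Matrix.fromBlocks 0 (-(Jb μ m * toep (fun k => E ⟨0, hm⟩ k)))
      (toep (fun k => E ⟨0, hm⟩ k)) 0 = Matrix.fromBlocks A B12 C D
    rw [hA, hD, hB12, hC, ← hE]
  · rintro ⟨c, rfl⟩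
    have e1 : Sb m * (toep c)ᵀ = toep c * Sb m := sharp_swap (toep_sharp c)
    have e2 : (toep c)ᵀ * Sb m = Sb m * toep c := sharp_swap' (toep_sharp c)
    have e3 : Sb m * (Jb μ m)ᵀ = Jb μ m * Sb m := sharp_swap (Jb_sharp μ)
    have e4 : (Jb μ m)ᵀ * Sb m = Sb m * Jb μ m := sharp_swap' (Jb_sharp μ)
    have e5 : toep c * Jb μ m = Jb μ m * toep c := toep_comm μ c
    have hphi : phi μ m c = Matrix.fromBlocks 0 (-(Jb μ m * toep c)) (toep c) 0 := rfl
    constructor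
    · show phi μ m c * (Mblk μ m * Sblk m) + (Mblk μ m * Sblk m) * (phi μ m c)ᵀ = 0
      rw [MS_eq, hphi, Matrix.fromBlocks_transpose]
      simp only [Matrix.fromBlocks_multiply, Matrix.fromBlocks_add, Matrix.mul_zero,
        Matrix.zero_mul, add_zero, zero_add, Matrix.transpose_zero, Matrix.transpose_neg,
        Matrix.transpose_mul, fromBlocks_eq_zero_iff, Matrix.neg_mul, Matrix.mul_neg,
        ← Matrix.mul_assoc]
      refine ⟨by simp, ?_, ?_, by simp⟩
      · rw [Matrix.mul_assoc (Jb μ m) (Sb m) ((toep c)ᵀ), e1, ← Matrix.mul_assoc]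
        exact neg_add_cancel _
      · rw [e1, Matrix.mul_assoc (toep c) (Sb m) ((Jb μ m)ᵀ), e3, ← Matrix.mul_assoc]
        exact add_neg_cancel _
    · show (phi μ m c)ᵀ * (Sblk m * Mblk μ m) + (Sblk m * Mblk μ m) * phi μ m c = 0
      rw [SM_eq, hphi, Matrix.fromBlocks_transpose]
      simp only [Matrix.fromBlocks_multiply, Matrix.fromBlocks_add, Matrix.mul_zero,
        Matrix.zero_mul, add_zero, zero_add, Matrix.transpose_zero, Matrix.transpose_neg,
        Matrix.transpose_mul, fromBlocks_eq_zero_iff, Matrix.neg_mul, Matrix.mul_neg,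
        ← Matrix.mul_assoc]
      refine ⟨by simp, ?_, ?_, by simp⟩
      · rw [e2, Matrix.mul_assoc (Sb m) (toep c) (Jb μ m), e5, ← Matrix.mul_assoc]
        exact add_neg_cancel _
      · rw [Matrix.mul_assoc ((toep c)ᵀ) ((Jb μ m)ᵀ) (Sb m), e4,
          ← Matrix.mul_assoc ((toep c)ᵀ) (Sb m) (Jb μ m), e2,
          Matrix.mul_assoc (Sb m) (toep c) (Jb μ m), e5, ← Matrix.mul_assoc]
        exact neg_add_cancel _

lemma phi_inj (μ : ℂ) (hm : 0 < m) : Function.Injective (phi μ m) := by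
  rw [injective_iff_map_eq_zero]
  intro c hc
  have hT : toep c = 0 := by
    have := (fromBlocks_eq_zero_iff.mp hc).2.2.1
    exact this
  funext k
  have h0 : toep c ⟨0, hm⟩ k = c k := by
    simp only [toep, Matrix.of_apply]
    rw [dif_pos (by omega)]
    congr 1
    all_goals apply Fin.ext
    all_goals omega
  rw [← h0, hT]
  simp

theorem key_finrank (μ : ℂ) (hm : 0 < m) :
    Module.finrank ℂ
      ↥(LinearMap.ker (rmap (Mblk μ m * Sblk m)) ⊓
        LinearMap.ker (lmap (Sblk m * Mblk μ m))) = m := by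
  rw [key_eq μ hm, LinearMap.finrank_range_of_inj (phi_inj μ hm), Module.finrank_fin_fun]

section transfer

variable {n : Type*} {n' : Type*} [Fintype n] [Fintype n'] [DecidableEq n] [DecidableEq n']

lemma rmap_reindex (e : n ≃ n') (P : Matrix n n ℂ) (B : Matrix n' n' ℂ) :
    rmap P ((Matrix.reindexLinearEquiv ℂ ℂ e e).symm B) = 0
      ↔ rmap (Matrix.reindexLinearEquiv ℂ ℂ e e P) B = 0 := by
  set r := Matrix.reindexLinearEquiv ℂ ℂ e e with hr
  have hx : ∀ X : Matrix n n ℂ, (X = 0 ↔ r X = 0) := by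
    intro X
    constructor
    · intro h; rw [h, map_zero]
    · intro h; have := congrArg r.symm h; simpa using this
  rw [hx]
  have hkey : r (rmap P (r.symm B)) = rmap (r P) B := by
    show r ((r.symm B) * P + P * (r.symm B)ᵀ) = B * r P + r P * Bᵀ
    rw [map_add]
    congr 1
    · rw [show (r.symm B) * P = r.symm B * r.symm (r P) by rw [LinearEquiv.symm_apply_apply],
        hr, Matrix.reindexLinearEquiv_symm, Matrix.reindexLinearEquiv_mul ℂ ℂ
          e.symm e.symm e.symm]
      simp
    · have ht : (r.symm B)ᵀ = r.symm Bᵀ := by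
        simp [hr, Matrix.reindexLinearEquiv_apply, Matrix.reindex_apply,
          Matrix.transpose_submatrix]
      rw [ht, show P * r.symm Bᵀ = r.symm (r P) * r.symm Bᵀ by rw [LinearEquiv.symm_apply_apply],
        hr, Matrix.reindexLinearEquiv_symm,
        Matrix.reindexLinearEquiv_mul ℂ ℂ e.symm e.symm e.symm]
      simp
  rw [hkey]

lemma lmap_reindex (e : n ≃ n') (P : Matrix n n ℂ) (B : Matrix n' n' ℂ) :
    lmap P ((Matrix.reindexLinearEquiv ℂ ℂ e e).symm B) = 0
      ↔ lmap (Matrix.reindexLinearEquiv ℂ ℂ e e P) B = 0 := by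
  set r := Matrix.reindexLinearEquiv ℂ ℂ e e with hr
  have hx : ∀ X : Matrix n n ℂ, (X = 0 ↔ r X = 0) := by
    intro X
    constructor
    · intro h; rw [h, map_zero]
    · intro h; have := congrArg r.symm h; simpa using this
  rw [hx]
  have hkey : r (lmap P (r.symm B)) = lmap (r P) B := by
    show r ((r.symm B)ᵀ * P + P * (r.symm B)) = Bᵀ * r P + r P * B
    rw [map_add]
    congr 1
    · have ht : (r.symm B)ᵀ = r.symm Bᵀ := by
        simp [hr, Matrix.reindexLinearEquiv_apply, Matrix.reindex_apply,
          Matrix.transpose_submatrix]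
      rw [ht, show r.symm Bᵀ * P = r.symm Bᵀ * r.symm (r P) by rw [LinearEquiv.symm_apply_apply],
        hr, Matrix.reindexLinearEquiv_symm,
        Matrix.reindexLinearEquiv_mul ℂ ℂ e.symm e.symm e.symm]
      simp
    · rw [show P * (r.symm B) = r.symm (r P) * r.symm B by rw [LinearEquiv.symm_apply_apply],
        hr, Matrix.reindexLinearEquiv_symm,
        Matrix.reindexLinearEquiv_mul ℂ ℂ e.symm e.symm e.symm]
      simp
  rw [hkey]

lemma finrank_transfer (e : n ≃ n') (P Q : Matrix n n ℂ) :
    Module.finrank ℂ ↥(LinearMap.ker (rmap P) ⊓ LinearMap.ker (lmap Q))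
      = Module.finrank ℂ
        ↥(LinearMap.ker (rmap (Matrix.reindexLinearEquiv ℂ ℂ e e P)) ⊓
          LinearMap.ker (lmap (Matrix.reindexLinearEquiv ℂ ℂ e e Q))) := by
  set r := Matrix.reindexLinearEquiv ℂ ℂ e e with hr
  have hmap : Submodule.map (r : Matrix n n ℂ →ₗ[ℂ] Matrix n' n' ℂ)
      (LinearMap.ker (rmap P) ⊓ LinearMap.ker (lmap Q))
      = LinearMap.ker (rmap (r P)) ⊓ LinearMap.ker (lmap (r Q)) := by
    ext X
    rw [Submodule.mem_map]
    constructor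
    · rintro ⟨Y, hY, rfl⟩
      simp only [Submodule.mem_inf, LinearMap.mem_ker] at hY
      obtain ⟨hY1, hY2⟩ := hY
      simp only [Submodule.mem_inf, LinearMap.mem_ker]
      constructor
      · have h3 := (rmap_reindex e P (r Y)).mp
        rw [LinearEquiv.symm_apply_apply] at h3
        exact h3 hY1
      · have h3 := (lmap_reindex e Q (r Y)).mp
        rw [LinearEquiv.symm_apply_apply] at h3
        exact h3 hY2
    · intro hX
      simp only [Submodule.mem_inf, LinearMap.mem_ker] at hX
      obtain ⟨hX1, hX2⟩ := hX
      refine ⟨r.symm X, ?_, by simp⟩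
      simp only [Submodule.mem_inf, LinearMap.mem_ker]
      exact ⟨(rmap_reindex e P X).mpr hX1, (lmap_reindex e Q X).mpr hX2⟩
  rw [← hmap]
  exact (LinearEquiv.finrank_map_eq r _).symm

end transfer

/-- For `λ = it` with `t > 0` (so `λ²` is a negative real), the space of
`2m × 2m` matrices `X` with `X·M·N + M·N·Xᵀ = 0` and `Xᵀ·N·conj(M) + N·conj(M)·X = 0`
(where `M = M_{λ,m}` and `N = S_{2m}`) has dimension `m`. -/
theorem stmt8 (l : ℂ) (hre : l.re = 0) (him : 0 < l.im) (m : ℕ) (hm : 0 < m) :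
    Module.finrank ℂ
      ↥(LinearMap.ker (rmap (Mb l m * Nb l m)) ⊓
        LinearMap.ker (lmap (Nb l m * (Mb l m).map (starRingEnd ℂ)))) = m := by
  have him' : l.im ≠ 0 := ne_of_gt him
  have hn : sz l m = m + m := by rw [sz, if_neg him', two_mul]
  set e : Fin (sz l m) ≃ Fin m ⊕ Fin m := (finCongr hn).trans finSumFinEquiv.symm with he
  have hvl : ∀ i : Fin m, ((e.symm (Sum.inl i)) : ℕ) = (i : ℕ) := by
    intro i
    simp [he, Equiv.symm_trans_apply, Equiv.symm_symm, finSumFinEquiv_apply_left]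
  have hvr : ∀ i : Fin m, ((e.symm (Sum.inr i)) : ℕ) = m + (i : ℕ) := by
    intro i
    simp [he, Equiv.symm_trans_apply, Equiv.symm_symm, finSumFinEquiv_apply_right]
    omega
  have hl2 : (starRingEnd ℂ) (l ^ 2) = l ^ 2 := by
    apply Complex.conj_eq_iff_im.mpr
    simp [sq, Complex.mul_im, hre]
  have hconj : (Mb l m).map (starRingEnd ℂ) = Mb l m := by
    ext i j
    simp only [Matrix.map_apply, Mb, Matrix.of_apply]
    rw [if_neg him']
    split_ifs <;> simp [hl2]
  have rM : Matrix.reindexLinearEquiv ℂ ℂ e e (Mb l m) = Mblk (l ^ 2) m := by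
    ext i j
    rw [Matrix.reindexLinearEquiv_apply, Matrix.reindex_apply, Matrix.submatrix_apply]
    rcases i with i | i <;> rcases j with j | j
    · simp only [Mb, Matrix.of_apply, hvl]
      rw [if_neg him', if_neg (by have := j.isLt; omega : ¬((i : ℕ) < m ∧ m ≤ (j : ℕ))),
        if_neg (by have := i.isLt; omega : ¬(m ≤ (i : ℕ) ∧ (i : ℕ) - m = (j : ℕ)))]
      simp [Mblk]
    · simp only [Mb, Matrix.of_apply, hvl, hvr]
      rw [if_neg him',
        if_pos (by have := i.isLt; omega : (i : ℕ) < m ∧ m ≤ m + (j : ℕ))]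
      simp only [Nat.add_sub_cancel_left]
      simp [Mblk, Jb]
    · simp only [Mb, Matrix.of_apply, hvl, hvr]
      rw [if_neg him', if_neg (by omega : ¬(m + (i : ℕ) < m ∧ m ≤ (j : ℕ)))]
      by_cases hij : (i : ℕ) = (j : ℕ)
      · rw [if_pos (by omega : m ≤ m + (i : ℕ) ∧ m + (i : ℕ) - m = (j : ℕ))]
        simp [Mblk, Matrix.one_apply, Fin.ext_iff, hij]
      · rw [if_neg (by omega : ¬(m ≤ m + (i : ℕ) ∧ m + (i : ℕ) - m = (j : ℕ)))]
        simp [Mblk, Matrix.one_apply, Fin.ext_iff, hij]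
    · simp only [Mb, Matrix.of_apply, hvr]
      rw [if_neg him', if_neg (by have := i.isLt; omega : ¬(m + (i : ℕ) < m ∧ m ≤ m + (j : ℕ))),
        if_neg (by have := i.isLt; omega : ¬(m ≤ m + (i : ℕ) ∧ m + (i : ℕ) - m = m + (j : ℕ)))]
      simp [Mblk]
  have rS : Matrix.reindexLinearEquiv ℂ ℂ e e (Nb l m) = Sblk m := by
    ext i j
    rw [Matrix.reindexLinearEquiv_apply, Matrix.reindex_apply, Matrix.submatrix_apply]
    rcases i with i | i <;> rcases j with j | j
    · simp only [Nb, Sb, Matrix.of_apply, hvl]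
      rw [if_neg (by have := i.isLt; have := j.isLt; omega :
        ¬((i : ℕ) + (j : ℕ) + 1 = sz l m))]
      simp [Sblk]
    · simp only [Nb, Sb, Matrix.of_apply, hvl, hvr]
      by_cases hc : (i : ℕ) + (j : ℕ) + 1 = m
      · rw [if_pos (by omega)]
        simp [Sblk, Sb, hc]
      · rw [if_neg (by omega)]
        simp [Sblk, Sb, hc]
    · simp only [Nb, Sb, Matrix.of_apply, hvl, hvr]
      by_cases hc : (i : ℕ) + (j : ℕ) + 1 = m
      · rw [if_pos (by omega)]
        simp [Sblk, Sb, hc]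
      · rw [if_neg (by omega)]
        simp [Sblk, Sb, hc]
    · simp only [Nb, Sb, Matrix.of_apply, hvr]
      rw [if_neg (by have := i.isLt; have := j.isLt; omega :
        ¬(m + (i : ℕ) + (m + (j : ℕ)) + 1 = sz l m))]
      simp [Sblk]
  rw [hconj, finrank_transfer e (Mb l m * Nb l m) (Nb l m * Mb l m),
    ← Matrix.reindexLinearEquiv_mul ℂ ℂ e e e, ← Matrix.reindexLinearEquiv_mul ℂ ℂ e e e,
    rM, rS]
  exact key_finrank (l ^ 2) hm
end
end

section
/- For a positive integer m, let D_m be the m×m diagonal matrix whose (j,j) entry is m/2 − (j−1) for j = 1, …, m, i.e., D_m = Diag(m/2, m/2 − 1, …, m/2 − m + 1). Then D_m·T_m·S_m + T_m·S_m·D_mᵀ = 2·T_m·S_m and D_mᵀ·S_m·T_m + S_m·T_m·D_m = 0. -/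
open Matrix

noncomputable section

open scoped Classical

/-- The diagonal matrix `D_m = Diag(m/2, m/2 − 1, …, m/2 − m + 1)`. -/
def Dm (m : ℕ) : Matrix (Fin m) (Fin m) ℂ :=
  Matrix.of fun i j => if i = j then ((m : ℂ) / 2 - (i : ℕ)) else 0

/-- `D_m·T_m·S_m + T_m·S_m·D_mᵀ = 2·T_m·S_m` and
`D_mᵀ·S_m·T_m + S_m·T_m·D_m = 0`. -/
theorem stmt10 (m : ℕ) (hm : 0 < m) :
    Dm m * (Jb 0 m * Sb m) + Jb 0 m * Sb m * (Dm m)ᵀ = (2 : ℂ) • (Jb 0 m * Sb m) ∧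
    (Dm m)ᵀ * (Sb m * Jb 0 m) + Sb m * Jb 0 m * Dm m = 0 := by
  have hD : Dm m = Matrix.diagonal (fun i : Fin m => ((m : ℂ) / 2 - (i : ℕ))) := by
    ext i j
    simp [Dm, Matrix.diagonal]
  have hTS : ∀ i j : Fin m, (Jb 0 m * Sb m) i j =
      if (i : ℕ) + (j : ℕ) + 2 = m then 1 else 0 := by
    intro i j
    rw [Matrix.mul_apply]
    by_cases hi1 : (i : ℕ) + 1 < m
    · rw [Finset.sum_eq_single_of_mem (⟨(i:ℕ)+1, hi1⟩ : Fin m) (Finset.mem_univ _)]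
      · simp only [Jb, Sb, Matrix.of_apply]
        split_ifs <;> simp_all <;> omega
      · intro b _ hb
        have : (b : ℕ) ≠ (i : ℕ) + 1 := fun hc => hb (Fin.ext hc)
        simp [Jb, Sb, this]
    · rw [Finset.sum_eq_zero]
      · have : ¬ ((i:ℕ) + (j:ℕ) + 2 = m) := by omega
        simp [this]
      · intro b _
        have : (b : ℕ) ≠ (i : ℕ) + 1 := by omega
        simp [Jb, Sb, this]
  have hST : ∀ i j : Fin m, (Sb m * Jb 0 m) i j =
      if (i : ℕ) + (j : ℕ) = m then 1 else 0 := by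
    intro i j
    rw [Matrix.mul_apply]
    by_cases hj1 : 1 ≤ (j : ℕ)
    · have hjm : (j : ℕ) - 1 < m := by omega
      rw [Finset.sum_eq_single_of_mem (⟨(j:ℕ)-1, hjm⟩ : Fin m) (Finset.mem_univ _)]
      · simp only [Jb, Sb, Matrix.of_apply, Fin.val_mk]
        have e1 : ¬ ((j:ℕ) = (j:ℕ) - 1) := by omega
        have e2 : (j:ℕ) = (j:ℕ) - 1 + 1 := by omega
        have e3 : ((i:ℕ) + ((j:ℕ)-1) + 1 = m) ↔ ((i:ℕ)+(j:ℕ) = m) := by omega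
        rw [if_neg e1, if_pos e2]
        simp only [e3, mul_one]
      · intro b _ hb
        rw [Fin.ne_iff_vne] at hb
        have hb2 : (b : ℕ) ≠ (j : ℕ) - 1 := hb
        have h2 : ¬ ((j : ℕ) = (b : ℕ) + 1) := by omega
        by_cases h0 : (j : ℕ) = (b : ℕ)
        · simp [Jb, h0]
        · simp [Jb, h0, h2]
    · have hj0 : (j : ℕ) = 0 := by omega
      rw [Finset.sum_eq_zero]
      · have : ¬ ((i:ℕ) + (j:ℕ) = m) := by omega
        simp [this]
      · intro b _
        have h1 : ¬ ((j : ℕ) = (b : ℕ) + 1) := by omega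
        by_cases h0 : (j : ℕ) = (b : ℕ)
        · simp [Jb, h0]
        · simp [Jb, h0, h1]
  constructor
  · ext i j
    rw [Matrix.add_apply, Matrix.smul_apply, hD, Matrix.diagonal_transpose,
      Matrix.diagonal_mul, Matrix.mul_diagonal, hTS, smul_eq_mul]
    by_cases h : (i : ℕ) + (j : ℕ) + 2 = m
    · have hm' : (m : ℂ) = (i : ℕ) + (j : ℕ) + 2 := by exact_mod_cast congrArg Nat.cast h.symm
      simp only [h, if_pos]
      rw [hm']
      ring
    · simp [h]
  · ext i j
    rw [Matrix.add_apply, hD, Matrix.diagonal_transpose, Matrix.diagonal_mul,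
      Matrix.mul_diagonal, hST, Matrix.zero_apply]
    by_cases h : (i : ℕ) + (j : ℕ) = m
    · have hm' : (m : ℂ) = (i : ℕ) + (j : ℕ) := by exact_mod_cast congrArg Nat.cast h.symm
      simp only [h, if_pos]
      rw [hm']
      ring
    · simp [h]
end
end

section
/- Let (H, A) be a canonical pair such that A is not nilpotent (equivalently, some parameter λᵢ of the canonical pair is nonzero). If B is a complex square matrix of the same size and η, η' ∈ ℂ satisfy B·A·H⁻¹ + A·H⁻¹·Bᵀ = η·A·H⁻¹ and Bᵀ·H·conj(A) + H·conj(A)·B = η'·H·conj(A), then η = η'. -/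
open Matrix

noncomputable section

open scoped Classical

/-!
As `H` is invertible, multiplying the first identity on the right by `H·conj(A)` and the
second on the left by `A·H⁻¹` and subtracting gives `[B, A·conj(A)] = (η - η')·A·conj(A)`.
If `η ≠ η'`, the powers of `A·conj(A)` are then eigenvectors of `ad B` with the pairwise
distinct eigenvalues `n(η - η')`, so in finite dimension `A·conj(A)` is nilpotent. But a block
of `A` that is not nilpotent has `λ ≠ 0`, and the first basis vector of that block is an
eigenvector of `A·conj(A)` with eigenvalue `λ² ≠ 0`.
-/

theorem mul_pow_sub_pow_mul_eq_smul {K R : Type*} [CommRing K] [Ring R] [Algebra K R]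
    {b x : R} {δ : K} (h : b * x - x * b = δ • x) (n : ℕ) :
    b * x ^ n - x ^ n * b = (n * δ) • x ^ n := by
  induction n with
  | zero => simp
  | succ n ih =>
    calc b * x ^ (n + 1) - x ^ (n + 1) * b
        = (b * x ^ n - x ^ n * b) * x + x ^ n * (b * x - x * b) := by noncomm_ring
      _ = ((n + 1 : ℕ) * δ) • x ^ (n + 1) := by
        rw [ih, h, smul_mul_assoc, mul_smul_comm, ← pow_succ, ← add_smul]
        push_cast; ring_nf

theorem isNilpotent_of_mul_sub_mul_eq_smul {K R : Type*} [Field K] [CharZero K] [Ring R]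
    [Algebra K R] [FiniteDimensional K R] {b x : R} {δ : K} (h : b * x - x * b = δ • x)
    (hδ : δ ≠ 0) : IsNilpotent x := by
  by_contra hx
  let ad : Module.End K R := LinearMap.mulLeft K b - LinearMap.mulRight K b
  have hev (n : ℕ) : ad.HasEigenvector (n * δ) (x ^ n) :=
    ⟨Module.End.mem_eigenspace_iff.mpr (mul_pow_sub_pow_mul_eq_smul h n),
      fun h0 => hx ⟨n, h0⟩⟩
  have hinj : Function.Injective fun n : ℕ => (n : K) * δ :=
    fun _ _ hmn => Nat.cast_injective (mul_right_cancel₀ hδ hmn)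
  exact Module.Finite.not_linearIndependent_of_infinite _
    (ad.eigenvectors_linearIndependent' _ hinj _ hev)

theorem Matrix.not_isNilpotent_of_mulVec_eq_smul {K n : Type*} [Field K] [Fintype n]
    [DecidableEq n] {M : Matrix n n K} {v : n → K} {c : K} (hv : v ≠ 0) (hc : c ≠ 0)
    (h : M *ᵥ v = c • v) : ¬IsNilpotent M := fun hM =>
  hc (Module.End.hasEigenvalue_of_hasEigenvector
    (f := Matrix.toLin' M) ⟨Module.End.mem_eigenspace_iff.mpr h, hv⟩
    |>.isNilpotent_of_isNilpotent (hM.map Matrix.toLinAlgEquiv')).eq_zero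

theorem Matrix.isNilpotent_of_isUpperTriangular {R n : Type*} [CommRing R] [Fintype n]
    [DecidableEq n] [LinearOrder n] {M : Matrix n n R} (hM : M.IsUpperTriangular)
    (hdiag : ∀ i, M i i = 0) : IsNilpotent M := by
  refine ⟨Fintype.card n, ?_⟩
  have := M.aeval_self_charpoly
  simpa [Matrix.charpoly_of_isUpperTriangular M hM, hdiag] using this

theorem Matrix.isNilpotent_blockDiagonal'_iff {o R : Type*} {m' : o → Type*} [Fintype o]
    [DecidableEq o] [∀ i, Fintype (m' i)] [∀ i, DecidableEq (m' i)] [Semiring R]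
    {M : ∀ i, Matrix (m' i) (m' i) R} :
    IsNilpotent (blockDiagonal' M) ↔ ∀ i, IsNilpotent (M i) := by
  constructor
  · rintro ⟨k, hk⟩ i
    rw [← blockDiagonal'_pow, ← blockDiagonal'_zero] at hk
    exact ⟨k, congrFun (blockDiagonal'_injective hk) i⟩
  · intro hM
    choose k hk using hM
    refine ⟨Finset.univ.sup k, ?_⟩
    rw [← blockDiagonal'_pow, ← blockDiagonal'_zero]
    congr 1
    funext i
    exact pow_eq_zero_of_le (Finset.le_sup (Finset.mem_univ i)) (hk i)

theorem Matrix.mul_sub_mul_eq_sub_smul_of_add_eq_smul {R n : Type*} [CommRing R] [Fintype n]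
    [DecidableEq n]
    {H A C B X : Matrix n n R} {η η' : R} (hH : IsUnit H)
    (h1 : B * (A * H⁻¹) + A * H⁻¹ * X = η • (A * H⁻¹))
    (h2 : X * (H * C) + H * C * B = η' • (H * C)) :
    B * (A * C) - A * C * B = (η - η') • (A * C) := by
  have hHH : H⁻¹ * H = 1 := H.nonsing_inv_mul ((H.isUnit_iff_isUnit_det).mp hH)
  have e1 := congrArg (· * (H * C)) h1
  have e2 := congrArg (A * H⁻¹ * ·) h2
  simp only [Matrix.add_mul, Matrix.mul_add, Matrix.smul_mul, Matrix.mul_smul,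
    Matrix.mul_assoc] at e1 e2
  simp only [← Matrix.mul_assoc H⁻¹, hHH, Matrix.one_mul] at e1 e2
  rw [sub_smul, ← e1, ← e2, Matrix.mul_assoc]
  abel

lemma Sb_eq_permMatrix (n : ℕ) : Sb n = (Fin.revPerm : Equiv.Perm (Fin n)).permMatrix ℂ := by
  ext i j
  simp only [Sb, Equiv.Perm.permMatrix, PEquiv.toMatrix_apply, Matrix.of_apply]
  simp only [Equiv.toPEquiv_apply, Option.mem_def, Option.some.injEq, Fin.revPerm_apply,
    Fin.ext_iff, Fin.val_rev]
  have := i.isLt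
  exact if_congr (by omega) rfl rfl

lemma Sb_mul_self (n : ℕ) : Sb n * Sb n = 1 := by
  have : (Fin.revPerm : Equiv.Perm (Fin n)) * Fin.revPerm = 1 := by ext; simp
  rw [Sb_eq_permMatrix, ← Matrix.permMatrix_mul, this, Matrix.permMatrix_one]

lemma isNilpotent_Mb_zero (m : ℕ) : IsNilpotent (Mb 0 m) := by
  refine Matrix.isNilpotent_of_isUpperTriangular (fun i j hij => ?_) (fun i => by simp [Mb])
  have : (j : ℕ) < i := hij
  simp [Mb]
  omega

lemma Mb_mul_conj_mulVec_single_zero {l : ℂ} {m : ℕ} (h : 0 < sz l m) :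
    (Mb l m * (Mb l m).map (starRingEnd ℂ)) *ᵥ Pi.single ⟨0, h⟩ 1 =
      l ^ 2 • Pi.single ⟨0, h⟩ 1 := by
  ext x
  have hx := x.isLt
  rw [Matrix.mulVec_single_one, Matrix.col_apply, Matrix.mul_apply]
  by_cases him : l.im = 0
  · have hcl : (starRingEnd ℂ) l = l := Complex.conj_eq_iff_im.mpr him
    rw [Finset.sum_eq_single ⟨0, h⟩]
    · simp [Mb, him, hcl, Pi.single_apply, Fin.ext_iff, sq, eq_comm]
    · intro b _ hb
      have hb : (b : ℕ) ≠ 0 := fun e => hb (Fin.ext e)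
      have hb0 : Mb l m b ⟨0, h⟩ = 0 := by simp [Mb, him]; omega
      rw [Matrix.map_apply, hb0, map_zero, mul_zero]
    · simp
  · -- column `0` of `Mb l m` is `e_m`, and column `m` is `l² e_0`
    have h2m : sz l m = 2 * m := by simp [sz, him]
    rw [Finset.sum_eq_single ⟨m, by omega⟩]
    · simp [Mb, him, Pi.single_apply, Fin.ext_iff]
      split_ifs <;> first | rfl | omega
    · intro b _ hb
      have hb : (b : ℕ) ≠ m := fun e => hb (Fin.ext e)
      have hb0 : Mb l m b ⟨0, h⟩ = 0 := by
        simp only [Mb, Matrix.of_apply, if_neg him]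
        split_ifs <;> first | rfl | omega
      rw [Matrix.map_apply, hb0, map_zero, mul_zero]
    · simp

lemma not_isNilpotent_Mb_mul_conj {l : ℂ} {m : ℕ} (h : ¬IsNilpotent (Mb l m)) :
    ¬IsNilpotent (Mb l m * (Mb l m).map (starRingEnd ℂ)) := by
  have hl : l ≠ 0 := by rintro rfl; exact h (isNilpotent_Mb_zero m)
  have hsz : 0 < sz l m := by
    by_contra h0
    have : IsEmpty (Fin (sz l m)) := by rw [Nat.eq_zero_of_not_pos h0]; infer_instance
    exact h isNilpotent_of_subsingleton
  exact Matrix.not_isNilpotent_of_mulVec_eq_smul (by simp) (pow_ne_zero 2 hl)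
    (Mb_mul_conj_mulVec_single_zero hsz)

lemma blockDiagonal'_smul_Nb_mul_self {γ : ℕ} (lam : Fin γ → ℂ) (mm : Fin γ → ℕ)
    {eps : Fin γ → ℂ} (heps : ∀ i, eps i = 1 ∨ eps i = -1) :
    blockDiagonal' (fun i => eps i • Nb (lam i) (mm i)) *
      blockDiagonal' (fun i => eps i • Nb (lam i) (mm i)) = 1 := by
  rw [← blockDiagonal'_mul, ← blockDiagonal'_one]
  congr 1
  funext i
  have : eps i * eps i = 1 := by rcases heps i with h | h <;> simp [h]
  rw [smul_mul_smul_comm, this, one_smul, Nb, Sb_mul_self]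
  rfl

theorem stmt12_general (γ : ℕ) (lam : Fin γ → ℂ) (mm : Fin γ → ℕ) (eps : Fin γ → ℂ)
    (heps : ∀ i, eps i = 1 ∨ eps i = -1)
    (H A : Matrix ((i : Fin γ) × Fin (sz (lam i) (mm i)))
      ((i : Fin γ) × Fin (sz (lam i) (mm i))) ℂ)
    (hH : H = Matrix.blockDiagonal' fun i => eps i • Nb (lam i) (mm i))
    (hA : A = Matrix.blockDiagonal' fun i => Mb (lam i) (mm i))
    (hA0 : ¬IsNilpotent A)
    (B : Matrix ((i : Fin γ) × Fin (sz (lam i) (mm i)))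
      ((i : Fin γ) × Fin (sz (lam i) (mm i))) ℂ)
    (η η' : ℂ)
    (h1 : B * (A * H⁻¹) + (A * H⁻¹) * Bᵀ = η • (A * H⁻¹))
    (h2 : Bᵀ * (H * A.map (starRingEnd ℂ)) + (H * A.map (starRingEnd ℂ)) * B =
      η' • (H * A.map (starRingEnd ℂ))) :
    η = η' := by
  have hHH : H * H = 1 := hH ▸ blockDiagonal'_smul_Nb_mul_self lam mm heps
  have hcomm := Matrix.mul_sub_mul_eq_sub_smul_of_add_eq_smul ⟨⟨H, H, hHH, hHH⟩, rfl⟩ h1 h2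
  have hAA : ¬IsNilpotent (A * A.map (starRingEnd ℂ)) := by
    obtain ⟨i, hi⟩ : ∃ i, ¬IsNilpotent (Mb (lam i) (mm i)) := by
      simpa [hA, Matrix.isNilpotent_blockDiagonal'_iff] using hA0
    rw [hA, blockDiagonal'_map _ _ (map_zero _), ← blockDiagonal'_mul,
      Matrix.isNilpotent_blockDiagonal'_iff]
    exact fun h => not_isNilpotent_Mb_mul_conj hi (h i)
  by_contra hne
  exact hAA (isNilpotent_of_mul_sub_mul_eq_smul hcomm (sub_ne_zero.mpr hne))

/-- For a canonical pair `(H, A)` with `A` not nilpotent, if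
`B·A·H⁻¹ + A·H⁻¹·Bᵀ = η·A·H⁻¹` and `Bᵀ·H·conj(A) + H·conj(A)·B = η'·H·conj(A)`
then `η = η'`. -/
theorem stmt12 (γ : ℕ) (hγ : 0 < γ) (lam : Fin γ → ℂ) (mm : Fin γ → ℕ) (eps : Fin γ → ℂ)
    (hnorm : ∀ i, Normalized (lam i)) (hm : ∀ i, 0 < mm i)
    (heps : ∀ i, eps i = 1 ∨ eps i = -1)
    (H A : Matrix ((i : Fin γ) × Fin (sz (lam i) (mm i)))
      ((i : Fin γ) × Fin (sz (lam i) (mm i))) ℂ)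
    (hH : H = Matrix.blockDiagonal' fun i => eps i • Nb (lam i) (mm i))
    (hA : A = Matrix.blockDiagonal' fun i => Mb (lam i) (mm i))
    (hA0 : ¬IsNilpotent A)
    (B : Matrix ((i : Fin γ) × Fin (sz (lam i) (mm i)))
      ((i : Fin γ) × Fin (sz (lam i) (mm i))) ℂ)
    (η η' : ℂ)
    (h1 : B * (A * H⁻¹) + (A * H⁻¹) * Bᵀ = η • (A * H⁻¹))
    (h2 : Bᵀ * (H * A.map (starRingEnd ℂ)) + (H * A.map (starRingEnd ℂ)) * B =
      η' • (H * A.map (starRingEnd ℂ))) :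
    η = η' :=
  stmt12_general γ lam mm eps heps H A hH hA hA0 B η η' h1 h2
end
end
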